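/- Let r ≥ 3 and n ≥ r + 1. Then χ^e(K_n^r) = χ^ve(K_n^r) = χ^ven(K_n^r) = 2, where K_n^r is the complete r-uniform hypergraph on n vertices. -/

import Mathlib

open Finset

open Classical in
/-- `σ^e(v) = Σ_{e ∋ v} w(e)` for a hypergraph with edge set `E`. -/
noncomputable def sigmaE {V : Type*} [Fintype V] (E : Finset (Finset V))
    (w : Finset V → ℕ) (v : V) : ℕ :=
  ∑ e ∈ E.filter (fun e => v ∈ e), w e

/-- The hypergraph with edge set `E` admits an edge weighting with weights in
`{1,…,k}` such that `σ^e` is a proper vertex coloring: every edge with at least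
two vertices contains two vertices with distinct colors. -/
def HasNSDEdgeWeighting {V : Type*} [Fintype V] (E : Finset (Finset V)) (k : ℕ) : Prop :=
  ∃ w : Finset V → ℕ, (∀ e ∈ E, 1 ≤ w e ∧ w e ≤ k) ∧
    ∀ e ∈ E, 2 ≤ e.card → ∃ u ∈ e, ∃ v ∈ e, sigmaE E w u ≠ sigmaE E w v

open Classical in
/-- `σ^ve(v) = w(v) + Σ_{e ∋ v} w(e)` for a total weighting of a hypergraph. -/
noncomputable def sigmaVE {V : Type*} [Fintype V] (E : Finset (Finset V))
    (wV : V → ℕ) (wE : Finset V → ℕ) (v : V) : ℕ :=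
  wV v + ∑ e ∈ E.filter (fun e => v ∈ e), wE e

open Classical in
/-- `σ^ven(v) = w(v) + Σ_{e ∋ v} w(e) + Σ_{u ∈ N(v)} w(u)`, where
`N(v) = {u ≠ v : some edge contains both u and v}`. -/
noncomputable def sigmaVEN {V : Type*} [Fintype V] (E : Finset (Finset V))
    (wV : V → ℕ) (wE : Finset V → ℕ) (v : V) : ℕ :=
  sigmaVE E wV wE v +
    ∑ u ∈ Finset.univ.filter (fun u => u ≠ v ∧ ∃ e ∈ E, v ∈ e ∧ u ∈ e), wV u

/-- The hypergraph with edge set `E` admits a total weighting with weights in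
`{1,…,k}` such that `σ^ve` is a proper vertex coloring. -/
def HasNSDTotalWeightingVE {V : Type*} [Fintype V] (E : Finset (Finset V)) (k : ℕ) : Prop :=
  ∃ wV : V → ℕ, ∃ wE : Finset V → ℕ,
    (∀ v : V, 1 ≤ wV v ∧ wV v ≤ k) ∧ (∀ e ∈ E, 1 ≤ wE e ∧ wE e ≤ k) ∧
    ∀ e ∈ E, 2 ≤ e.card →
      ∃ u ∈ e, ∃ v ∈ e, sigmaVE E wV wE u ≠ sigmaVE E wV wE v

/-- The hypergraph with edge set `E` admits a total weighting with weights in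
`{1,…,k}` such that `σ^ven` is a proper vertex coloring. -/
def HasNFSDTotalWeighting {V : Type*} [Fintype V] (E : Finset (Finset V)) (k : ℕ) : Prop :=
  ∃ wV : V → ℕ, ∃ wE : Finset V → ℕ,
    (∀ v : V, 1 ≤ wV v ∧ wV v ≤ k) ∧ (∀ e ∈ E, 1 ≤ wE e ∧ wE e ≤ k) ∧
    ∀ e ∈ E, 2 ≤ e.card →
      ∃ u ∈ e, ∃ v ∈ e, sigmaVEN E wV wE u ≠ sigmaVEN E wV wE v

/-- The edge set of the complete `r`-uniform hypergraph on `Fin n`: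
all `r`-element subsets. -/
def completeEdges (n r : ℕ) : Finset (Finset (Fin n)) :=
  Finset.univ.powersetCard r


/-!
With all weights equal to 1, every vertex sum is determined by the vertex degree and the
size of the neighbourhood, both constant on `K_n^r`, so one weight never suffices. An edge
weighting with vertex weights 1 added is a total weighting of the same quality, so it remains to
find a good edge weighting with weights 1 and 2.

Put the `r - 2` largest vertices into a set `B`, call the other `m = n - r + 2` vertices small,
and give weight 2 exactly to the edges `B ∪ {u, v}` with `u ≠ v` small and `u + v ≥ m - 1`.
A small vertex `v` lies in `v` or `v + 1` of these heavy edges, so a heavy degree is shared by at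
most two small vertices, and a shared value is below `m - 1`; each vertex of `B` lies in all
heavy edges, of which there are at least `m - 1`. Every edge has two small vertices and a third
one, so the heavy degree, and with it `σ^e`, is not constant on it.
-/

section Weightings

variable {V : Type*} {E H : Finset (Finset V)} {k : ℕ}

open Classical in
noncomputable def vertexDegree (E : Finset (Finset V)) (v : V) : ℕ :=
  #(E.filter (fun e => v ∈ e))

lemma vertexDegree_le_card (E : Finset (Finset V)) (v : V) : vertexDegree E v ≤ #E := by
  classical
  exact card_filter_le _ _

variable [Fintype V]

open Classical in
noncomputable def neighborhood (E : Finset (Finset V)) (v : V) : Finset V :=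
  Finset.univ.filter (fun u => u ≠ v ∧ ∃ e ∈ E, v ∈ e ∧ u ∈ e)

lemma sigmaE_of_forall_eq_one {w : Finset V → ℕ} (hw : ∀ e ∈ E, w e = 1) (v : V) :
    sigmaE E w v = vertexDegree E v := by
  classical
  rw [sigmaE, vertexDegree, card_eq_sum_ones]
  exact sum_congr rfl fun e he => hw e (mem_filter.1 he).1

open Classical in
lemma sigmaE_ite_mem (hH : H ⊆ E) (v : V) :
    sigmaE E (fun e => if e ∈ H then 2 else 1) v = vertexDegree E v + vertexDegree H v := by
  have hHv : (E.filter (fun e => v ∈ e)).filter (· ∈ H) = H.filter (fun e => v ∈ e) := by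
    ext e
    simp only [mem_filter]
    exact ⟨fun h => ⟨h.2, h.1.2⟩, fun h => ⟨⟨hH h.1, h.2⟩, h.1⟩⟩
  rw [sigmaE, vertexDegree, vertexDegree, ← hHv, card_filter (· ∈ H),
    card_eq_sum_ones, ← sum_add_distrib]
  exact sum_congr rfl fun e _ => by split_ifs <;> rfl

lemma sigmaVE_eq_iff {wV : V → ℕ} (hwV : ∀ v, wV v = 1) (wE : Finset V → ℕ) (u v : V) :
    sigmaVE E wV wE u = sigmaVE E wV wE v ↔ sigmaE E wE u = sigmaE E wE v := by
  simp only [sigmaVE, sigmaE, hwV, Nat.add_left_cancel_iff]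

lemma sigmaVEN_eq_iff (hN : ∀ u v, #(neighborhood E u) = #(neighborhood E v))
    {wV : V → ℕ} (hwV : ∀ v, wV v = 1) (wE : Finset V → ℕ) (u v : V) :
    sigmaVEN E wV wE u = sigmaVEN E wV wE v ↔ sigmaE E wE u = sigmaE E wE v := by
  have hsum (x : V) : sigmaVEN E wV wE x = sigmaVE E wV wE x + #(neighborhood E x) := by
    rw [sigmaVEN, neighborhood, card_eq_sum_ones]
    exact congrArg _ (sum_congr rfl fun y _ => hwV y)
  rw [hsum, hsum, hN u v, Nat.add_right_cancel_iff, sigmaVE_eq_iff hwV]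

lemma not_hasNSDEdgeWeighting_one (hdeg : ∀ u v, vertexDegree E u = vertexDegree E v)
    {e : Finset V} (he : e ∈ E) (he2 : 2 ≤ #e) : ¬ HasNSDEdgeWeighting E 1 := by
  rintro ⟨w, hw, hsep⟩
  have hw1 : ∀ e ∈ E, w e = 1 := fun e he => le_antisymm (hw e he).2 (hw e he).1
  obtain ⟨u, -, v, -, hne⟩ := hsep e he he2
  exact hne (by rw [sigmaE_of_forall_eq_one hw1, sigmaE_of_forall_eq_one hw1, hdeg])

lemma hasNSDEdgeWeighting_two_of_subset (hH : H ⊆ E)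
    (hdeg : ∀ u v, vertexDegree E u = vertexDegree E v)
    (hsep : ∀ e ∈ E, 2 ≤ #e → ∃ u ∈ e, ∃ v ∈ e, vertexDegree H u ≠ vertexDegree H v) :
    HasNSDEdgeWeighting E 2 := by
  classical
  refine ⟨fun e => if e ∈ H then 2 else 1, fun e _ => by dsimp only; split_ifs <;> simp,
    fun e he he2 => ?_⟩
  obtain ⟨u, hu, v, hv, hne⟩ := hsep e he he2
  refine ⟨u, hu, v, hv, fun h => hne ?_⟩
  rw [sigmaE_ite_mem hH, sigmaE_ite_mem hH, hdeg u v] at h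
  exact Nat.add_left_cancel h

lemma HasNSDEdgeWeighting.hasNSDTotalWeightingVE (h : HasNSDEdgeWeighting E k) (hk : 1 ≤ k) :
    HasNSDTotalWeightingVE E k := by
  obtain ⟨w, hw, hsep⟩ := h
  refine ⟨fun _ => 1, w, fun _ => ⟨le_rfl, hk⟩, hw, fun e he he2 => ?_⟩
  simpa only [ne_eq, sigmaVE_eq_iff (fun _ => rfl)] using hsep e he he2

lemma HasNSDTotalWeightingVE.hasNSDEdgeWeighting_one (h : HasNSDTotalWeightingVE E 1) :
    HasNSDEdgeWeighting E 1 := by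
  obtain ⟨wV, w, hwV, hw, hsep⟩ := h
  have hwV1 : ∀ v, wV v = 1 := fun v => le_antisymm (hwV v).2 (hwV v).1
  refine ⟨w, hw, fun e he he2 => ?_⟩
  simpa only [ne_eq, sigmaVE_eq_iff hwV1] using hsep e he he2

lemma HasNSDEdgeWeighting.hasNFSDTotalWeighting
    (hN : ∀ u v, #(neighborhood E u) = #(neighborhood E v)) (h : HasNSDEdgeWeighting E k)
    (hk : 1 ≤ k) : HasNFSDTotalWeighting E k := by
  obtain ⟨w, hw, hsep⟩ := h
  refine ⟨fun _ => 1, w, fun _ => ⟨le_rfl, hk⟩, hw, fun e he he2 => ?_⟩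
  simpa only [ne_eq, sigmaVEN_eq_iff hN (fun _ => rfl)] using hsep e he he2

lemma HasNFSDTotalWeighting.hasNSDEdgeWeighting_one
    (hN : ∀ u v, #(neighborhood E u) = #(neighborhood E v)) (h : HasNFSDTotalWeighting E 1) :
    HasNSDEdgeWeighting E 1 := by
  obtain ⟨wV, w, hwV, hw, hsep⟩ := h
  have hwV1 : ∀ v, wV v = 1 := fun v => le_antisymm (hwV v).2 (hwV v).1
  refine ⟨w, hw, fun e he he2 => ?_⟩
  simpa only [ne_eq, sigmaVEN_eq_iff hN hwV1] using hsep e he he2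

end Weightings

section CompleteHypergraph

variable {n r : ℕ}

lemma vertexDegree_completeEdges (hr : 1 ≤ r) (v : Fin n) :
    vertexDegree (completeEdges n r) v = (n - 1).choose (r - 1) := by
  have h := card_filter_powersetCard_subset {v} univ r (subset_univ _) (by simpa using hr)
  simp only [singleton_subset_iff, card_singleton, card_univ, Fintype.card_fin] at h
  rw [vertexDegree, completeEdges, ← h]
  congr

lemma neighborhood_completeEdges (hr : 2 ≤ r) (hrn : r ≤ n) (v : Fin n) :
    neighborhood (completeEdges n r) v = univ.erase v := by
  ext u
  simp only [neighborhood, mem_filter, mem_univ, true_and, mem_erase, and_true,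
    and_iff_left_iff_imp]
  intro huv
  obtain ⟨e, hsub, hcard⟩ := exists_superset_card_eq (s := {v, u}) (n := r)
    ((card_le_two).trans hr) (by simpa using hrn)
  exact ⟨e, by simp [completeEdges, hcard], hsub (by simp), hsub (by simp)⟩

end CompleteHypergraph

section HeavyEdges

variable {n m : ℕ}

def bigVertices (n m : ℕ) : Finset (Fin n) := {v | m ≤ v.val}

def IsHeavyPair (m : ℕ) (u v : Fin n) : Prop :=
  u ≠ v ∧ u.val < m ∧ v.val < m ∧ m - 1 ≤ u.val + v.val

instance (m : ℕ) : DecidableRel (IsHeavyPair (n := n) m) := fun _ _ => by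
  unfold IsHeavyPair; infer_instance

def heavyEdges (n m : ℕ) : Finset (Finset (Fin n)) :=
  {e | ∃ u v, IsHeavyPair m u v ∧ e = insert u (insert v (bigVertices n m))}

def heavyNeighbors (m : ℕ) (u : Fin n) : Finset (Fin n) := {v | IsHeavyPair m u v}

lemma IsHeavyPair.symm {u v : Fin n} (h : IsHeavyPair m u v) : IsHeavyPair m v u := by
  unfold IsHeavyPair at *; omega

lemma card_fin_filter_val_mem_Ico {a b : ℕ} (hb : b ≤ n) :
    #{u : Fin n | a ≤ u.val ∧ u.val < b} = b - a := by
  rw [← card_map Fin.valEmbedding, ← Nat.card_Ico a b]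
  congr 1
  ext x
  simp only [mem_map, mem_filter, mem_univ, true_and, Fin.valEmbedding_apply, mem_Ico]
  exact ⟨fun ⟨u, hu, hux⟩ => hux ▸ hu, fun hx => ⟨⟨x, by omega⟩, hx, rfl⟩⟩

lemma card_bigVertices : #(bigVertices n m) = n - m := by
  rw [← card_fin_filter_val_mem_Ico le_rfl, bigVertices]
  exact congrArg card (filter_congr fun u _ => by simp [u.isLt])

lemma notMem_bigVertices {v : Fin n} (hv : v.val < m) : v ∉ bigVertices n m := by
  simpa [bigVertices] using hv

lemma heavyEdges_subset_completeEdges {r : ℕ} (hr : 2 ≤ r) (hmr : m + r = n + 2) :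
    heavyEdges n m ⊆ completeEdges n r := by
  intro e he
  obtain ⟨u, v, ⟨huv, hu, hv, -⟩, rfl⟩ := by simpa [heavyEdges] using he
  have huB : u ∉ insert v (bigVertices n m) := by
    simp [huv, notMem_bigVertices hu]
  simp only [completeEdges, mem_powersetCard, subset_univ, true_and]
  rw [card_insert_of_notMem huB, card_insert_of_notMem (notMem_bigVertices hv), card_bigVertices]
  omega

lemma filter_mem_heavyEdges {w : Fin n} (hw : w.val < m) :
    (heavyEdges n m).filter (w ∈ ·) =
      (heavyNeighbors m w).image (fun u => insert u (insert w (bigVertices n m))) := by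
  ext e
  simp only [heavyEdges, heavyNeighbors, mem_filter, mem_univ, true_and, mem_image]
  constructor
  · rintro ⟨⟨u, v, huv, rfl⟩, hwe⟩
    rcases mem_insert.1 hwe with rfl | hwe
    · exact ⟨v, huv, insert_comm _ _ _⟩
    rcases mem_insert.1 hwe with rfl | hwB
    · exact ⟨u, huv.symm, rfl⟩
    · exact absurd hwB (notMem_bigVertices hw)
  · rintro ⟨u, hwu, rfl⟩
    exact ⟨⟨u, w, hwu.symm, rfl⟩, mem_insert_of_mem (mem_insert_self _ _)⟩

lemma vertexDegree_heavyEdges_of_lt {w : Fin n} (hw : w.val < m) :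
    vertexDegree (heavyEdges n m) w = #(heavyNeighbors m w) := by
  have hinj : Set.InjOn (fun u => insert u (insert w (bigVertices n m))) (heavyNeighbors m w) := by
    intro u hu u' _ h
    obtain ⟨hwu, -, hum, -⟩ : IsHeavyPair m w u := (mem_filter.1 (mem_coe.1 hu)).2
    exact (insert_inj (by simp [Ne.symm hwu, notMem_bigVertices hum])).1 h
  rw [← card_image_of_injOn hinj, ← filter_mem_heavyEdges hw, vertexDegree]
  congr

lemma card_heavyNeighbors (hmn : m ≤ n) {w : Fin n} (hw : w.val < m) :
    #(heavyNeighbors m w) = if m - 1 ≤ 2 * w.val then w.val else w.val + 1 := by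
  have hI : heavyNeighbors m w =
      ({u : Fin n | m - 1 - w.val ≤ u.val ∧ u.val < m} : Finset (Fin n)).erase w := by
    ext u
    simp only [heavyNeighbors, IsHeavyPair, mem_filter, mem_univ, true_and, mem_erase,
      ← Fin.val_ne_iff]
    omega
  rw [hI, card_erase_eq_ite, card_fin_filter_val_mem_Ico hmn]
  simp only [mem_filter, mem_univ, true_and]
  split_ifs <;> omega

lemma vertexDegree_heavyEdges_of_le {w : Fin n} (hw : m ≤ w.val) :
    vertexDegree (heavyEdges n m) w = #(heavyEdges n m) := by
  have hwB : w ∈ bigVertices n m := by simpa [bigVertices] using hw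
  have hall : ∀ e ∈ heavyEdges n m, w ∈ e := fun e he => by
    obtain ⟨u, v, -, rfl⟩ := by simpa [heavyEdges] using he
    exact mem_insert_of_mem (mem_insert_of_mem hwB)
  rw [vertexDegree]
  convert congrArg card (filter_true_of_mem hall)

lemma vertexDegree_heavyEdges_ne (hm : 3 ≤ m) (hmn : m ≤ n) {a b c : Fin n}
    (ha : a.val < m) (hb : b.val < m) (hab : a ≠ b) (hca : c ≠ a) (hcb : c ≠ b)
    (hdeg : vertexDegree (heavyEdges n m) a = vertexDegree (heavyEdges n m) b) :
    vertexDegree (heavyEdges n m) c ≠ vertexDegree (heavyEdges n m) a := by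
  have hsmall {v : Fin n} (hv : v.val < m) : vertexDegree (heavyEdges n m) v =
      if m - 1 ≤ 2 * v.val then v.val else v.val + 1 := by
    rw [vertexDegree_heavyEdges_of_lt hv, card_heavyNeighbors hmn hv]
  rw [← Fin.val_ne_iff] at hab hca hcb
  rw [hsmall ha, hsmall hb] at hdeg
  rcases lt_or_ge c.val m with hc | hc
  · rw [hsmall hc, hsmall ha]
    split_ifs at hdeg ⊢ <;> omega
  · have htop : m - 1 ≤ #(heavyEdges n m) := by
      have h := hsmall (v := ⟨m - 1, by omega⟩) (by simp; omega)
      rw [if_pos (by simp; omega)] at h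
      exact (Nat.le_of_eq h.symm).trans (vertexDegree_le_card _ _)
    rw [vertexDegree_heavyEdges_of_le hc, hsmall ha]
    split_ifs at hdeg ⊢ <;> omega

lemma exists_vertexDegree_heavyEdges_ne {r : ℕ} (hr : 3 ≤ r) (hm : 3 ≤ m) (hmr : m + r = n + 2)
    {e : Finset (Fin n)} (he : e ∈ completeEdges n r) :
    ∃ u ∈ e, ∃ v ∈ e, vertexDegree (heavyEdges n m) u ≠ vertexDegree (heavyEdges n m) v := by
  have hcard : #e = r := (mem_powersetCard.1 he).2
  obtain ⟨a, ha, b, hb, hab⟩ := one_lt_card.1 <| show 1 < #(e \ bigVertices n m) by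
    have := le_card_sdiff (bigVertices n m) e
    rw [card_bigVertices] at this
    omega
  simp only [mem_sdiff, bigVertices, mem_filter, mem_univ, true_and, not_le] at ha hb
  obtain ⟨c, hc⟩ := card_pos.1 <| show 0 < #((e.erase b).erase a) by
    rw [card_erase_of_mem (mem_erase.2 ⟨hab, ha.1⟩), card_erase_of_mem hb.1]
    omega
  simp only [mem_erase] at hc
  by_cases hdeg : vertexDegree (heavyEdges n m) a = vertexDegree (heavyEdges n m) b
  · exact ⟨c, hc.2.2, a, ha.1,
      vertexDegree_heavyEdges_ne hm (by omega) ha.2 hb.2 hab hc.1 hc.2.1 hdeg⟩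
  · exact ⟨a, ha.1, b, hb.1, hdeg⟩

end HeavyEdges

lemma hasNSDEdgeWeighting_completeEdges_two {n r : ℕ} (hr : 3 ≤ r) (hn : r + 1 ≤ n) :
    HasNSDEdgeWeighting (completeEdges n r) 2 :=
  hasNSDEdgeWeighting_two_of_subset (H := heavyEdges n (n + 2 - r))
    (heavyEdges_subset_completeEdges (by omega) (by omega))
    (fun u v => by
      rw [vertexDegree_completeEdges (by omega), vertexDegree_completeEdges (by omega)])
    (fun _ he _ => exists_vertexDegree_heavyEdges_ne hr (by omega) (by omega) he)

lemma isLeast_two_of {P : ℕ → Prop} (h2 : P 2) (h1 : ¬ P 1) : IsLeast {k | 0 < k ∧ P k} 2 := by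
  refine ⟨⟨two_pos, h2⟩, fun k ⟨hk, hPk⟩ => ?_⟩
  by_contra hlt
  obtain rfl : k = 1 := by omega
  exact h1 hPk

/-- For `r ≥ 3` and `n ≥ r + 1`,
`χ^e(K_n^r) = χ^ve(K_n^r) = χ^ven(K_n^r) = 2`. -/
theorem chi_completeHypergraph (n r : ℕ) (hr : 3 ≤ r) (hn : r + 1 ≤ n) :
    IsLeast {k : ℕ | 0 < k ∧ HasNSDEdgeWeighting (completeEdges n r) k} 2 ∧
    IsLeast {k : ℕ | 0 < k ∧ HasNSDTotalWeightingVE (completeEdges n r) k} 2 ∧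
    IsLeast {k : ℕ | 0 < k ∧ HasNFSDTotalWeighting (completeEdges n r) k} 2 := by
  have hdeg (u v : Fin n) :
      vertexDegree (completeEdges n r) u = vertexDegree (completeEdges n r) v := by
    rw [vertexDegree_completeEdges (by omega), vertexDegree_completeEdges (by omega)]
  have hN (u v : Fin n) :
      #(neighborhood (completeEdges n r) u) = #(neighborhood (completeEdges n r) v) := by
    simp [neighborhood_completeEdges (by omega : 2 ≤ r) (by omega : r ≤ n)]
  obtain ⟨e, he⟩ : (completeEdges n r).Nonempty := powersetCard_nonempty.2 (by simp; omega)
  have h2 := hasNSDEdgeWeighting_completeEdges_two hr hn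
  have h1 : ¬ HasNSDEdgeWeighting (completeEdges n r) 1 :=
    not_hasNSDEdgeWeighting_one hdeg he (by rw [(mem_powersetCard.1 he).2]; omega)
  exact ⟨isLeast_two_of h2 h1,
    isLeast_two_of (h2.hasNSDTotalWeightingVE one_le_two) (h1 ·.hasNSDEdgeWeighting_one),
    isLeast_two_of (h2.hasNFSDTotalWeighting hN one_le_two) (h1 <| ·.hasNSDEdgeWeighting_one hN)⟩
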